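/- Let α be a finite set with |α| ≥ 2, let Q be a probability mass function on α with Q(a) > 0 for every a ∈ α, let n ≥ 1 and let ℓ be an integer with 0 ≤ ℓ ≤ n/2. For a set A ⊆ αⁿ, let Â := { yⁿ ∈ αⁿ : ∃ xⁿ ∈ A with d_H(xⁿ, yⁿ) ≤ ℓ } denote its Hamming ℓ-blow-up. Then Q^{⊗n}(Â) ≤ Q^{⊗n}(A) · 2^{n·H_b(ℓ/n)} · |α|^{ℓ} · ( min_{a ∈ α} Q(a) )^{−ℓ}. -/

import Mathlib

open scoped BigOperators Classical

/-- `P` is a probability mass function on the finite set `Z`. -/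
def IsPmf {Z : Type*} [Fintype Z] (P : Z → ℝ) : Prop :=
  (∀ z, 0 ≤ P z) ∧ ∑ z, P z = 1

/-- The `n`-fold product pmf on `Fin n → Z`. -/
noncomputable def prodPmf {Z : Type*} [Fintype Z] (P : Z → ℝ) (n : ℕ) : (Fin n → Z) → ℝ :=
  fun x => ∏ i, P (x i)

/-- Binary entropy function (base-2 logarithm; `H_b 0 = 0` since `logb 2 0 = 0` in Lean). -/
noncomputable def binEnt (p : ℝ) : ℝ :=
  -(p * Real.logb 2 p) - (1 - p) * Real.logb 2 (1 - p)

/-!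
A point of the blow-up lies within Hamming distance `ℓ` of some `x ∈ A`, and changing at most `ℓ`
coordinates of `x` multiplies its `Q^{⊗n}`-probability by at most `(min Q)^{-ℓ}` because `Q ≤ 1`.
A Hamming ball of radius `ℓ` is covered by `∑_{k ≤ ℓ} C(n,k)` boxes with at most `|α|^ℓ` points
each. For `p = ℓ/n ≤ 1/2`, every term `p^k (1-p)^(n-k)` with `k ≤ ℓ` of the binomial expansion
of `(p + (1-p))^n = 1` is at least `p^ℓ (1-p)^(n-ℓ) = 2^{-n H_b(p)}`, whence
`∑_{k ≤ ℓ} C(n,k) ≤ 2^{n H_b(p)}`. A union bound over `x ∈ A` finishes.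
-/

open Finset

lemma Finset.sum_biUnion_le_sum_sum {ι β M : Type*} [DecidableEq β] [AddCommMonoid M]
    [PartialOrder M] [IsOrderedAddMonoid M] {s : Finset ι} {t : ι → Finset β} {f : β → M}
    (hf : ∀ b, 0 ≤ f b) : ∑ b ∈ s.biUnion t, f b ≤ ∑ i ∈ s, ∑ b ∈ t i, f b := by
  induction s using Finset.induction_on with
  | empty => simp
  | insert i s hi ih =>
    rw [biUnion_insert, sum_insert hi]
    calc ∑ b ∈ t i ∪ s.biUnion t, f b
        ≤ ∑ b ∈ t i ∪ s.biUnion t, f b + ∑ b ∈ t i ∩ s.biUnion t, f b :=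
          le_add_of_nonneg_right (sum_nonneg fun b _ => hf b)
      _ = ∑ b ∈ t i, f b + ∑ b ∈ s.biUnion t, f b := sum_union_inter
      _ ≤ ∑ b ∈ t i, f b + ∑ j ∈ s, ∑ b ∈ t j, f b := add_le_add_right ih _

lemma pow_mul_pow_sub_le_pow_mul_pow_sub {R : Type*} [CommSemiring R] [PartialOrder R]
    [IsOrderedRing R] {a b : R} (ha : 0 ≤ a) (hab : a ≤ b) {k ℓ n : ℕ} (hkℓ : k ≤ ℓ)
    (hℓn : ℓ ≤ n) : a ^ ℓ * b ^ (n - ℓ) ≤ a ^ k * b ^ (n - k) :=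
  calc a ^ ℓ * b ^ (n - ℓ) = a ^ k * a ^ (ℓ - k) * b ^ (n - ℓ) := by
        rw [← pow_add, Nat.add_sub_cancel' hkℓ]
    _ ≤ a ^ k * b ^ (ℓ - k) * b ^ (n - ℓ) := by
        have := pow_le_pow_left₀ ha hab (ℓ - k)
        have := pow_nonneg (ha.trans hab) (n - ℓ)
        gcongr
    _ = a ^ k * b ^ (n - k) := by rw [mul_assoc, ← pow_add]; congr 2; omega

lemma two_rpow_mul_binEnt_div {n ℓ : ℕ} (hℓ : 0 < ℓ) (hℓn : ℓ < n) :
    (2 : ℝ) ^ ((n : ℝ) * binEnt ((ℓ : ℝ) / n)) =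
      (((ℓ : ℝ) / n) ^ ℓ * (1 - (ℓ : ℝ) / n) ^ (n - ℓ))⁻¹ := by
  have hn : (0 : ℝ) < n := by exact_mod_cast hℓ.trans hℓn
  have hq : (0 : ℝ) < 1 - ℓ / n := by
    rw [sub_pos, div_lt_one hn]; exact_mod_cast hℓn
  have hnp : (n : ℝ) * (ℓ / n) = ℓ := by field_simp
  have hnq : (n : ℝ) * (1 - ℓ / n) = ((n - ℓ : ℕ) : ℝ) := by
    rw [Nat.cast_sub hℓn.le]; field_simp
  rw [← Real.rpow_logb two_pos (by norm_num) (inv_pos.2 (by positivity)), Real.logb_inv,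
    Real.logb_mul (by positivity) (by positivity), Real.logb_pow, Real.logb_pow, binEnt]
  congr 1
  linear_combination (-Real.logb 2 (ℓ / n)) * hnp + (-Real.logb 2 (1 - ℓ / n)) * hnq

lemma sum_range_choose_mul_pow_mul_pow_le_one {n ℓ : ℕ} (hℓn : ℓ ≤ n) {p : ℝ} (hp : 0 ≤ p)
    (hp_half : p ≤ 1 / 2) :
    (∑ k ∈ range (ℓ + 1), (n.choose k : ℝ)) * (p ^ ℓ * (1 - p) ^ (n - ℓ)) ≤ 1 :=
  calc (∑ k ∈ range (ℓ + 1), (n.choose k : ℝ)) * (p ^ ℓ * (1 - p) ^ (n - ℓ))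
      ≤ ∑ k ∈ range (ℓ + 1), p ^ k * (1 - p) ^ (n - k) * n.choose k := by
        rw [sum_mul]
        refine sum_le_sum fun k hk => ?_
        rw [mul_comm]
        exact mul_le_mul_of_nonneg_right (pow_mul_pow_sub_le_pow_mul_pow_sub hp (by linarith)
          (Nat.lt_succ_iff.1 (mem_range.1 hk)) hℓn) (Nat.cast_nonneg _)
    _ ≤ ∑ k ∈ range (n + 1), p ^ k * (1 - p) ^ (n - k) * n.choose k := by
        refine sum_le_sum_of_subset_of_nonneg (range_subset_range.2 (by omega)) fun k _ _ => ?_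
        have : 0 ≤ 1 - p := by linarith
        positivity
    _ = 1 := by rw [← add_pow, add_sub_cancel, one_pow]

lemma sum_range_choose_le_two_rpow_mul_binEnt {n ℓ : ℕ} (hℓ : (ℓ : ℝ) ≤ n / 2) :
    ∑ k ∈ range (ℓ + 1), (n.choose k : ℝ) ≤ (2 : ℝ) ^ ((n : ℝ) * binEnt ((ℓ : ℝ) / n)) := by
  rcases Nat.eq_zero_or_pos ℓ with rfl | hℓ0
  · simp [binEnt]
  have hℓn : ℓ < n := by
    have : (ℓ : ℝ) < n := by linarith [(Nat.cast_pos.2 hℓ0 : (0 : ℝ) < ℓ)]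
    exact_mod_cast this
  have hn : (0 : ℝ) < n := by exact_mod_cast hℓ0.trans hℓn
  have hp_half : (ℓ : ℝ) / n ≤ 1 / 2 := by rw [div_le_iff₀ hn]; linarith
  have hq : 0 < 1 - (ℓ : ℝ) / n := by linarith
  rw [two_rpow_mul_binEnt_div hℓ0 hℓn, ← one_div, le_div_iff₀ (by positivity)]
  exact sum_range_choose_mul_pow_mul_pow_le_one hℓn.le (by positivity) hp_half

def hammingBall {ι α : Type*} [Fintype ι] [DecidableEq ι] [Fintype α] [DecidableEq α]
    (x : ι → α) (ℓ : ℕ) : Finset (ι → α) :=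
  univ.filter fun y => hammingDist x y ≤ ℓ

lemma card_hammingBall_le {ι α : Type*} [Fintype ι] [DecidableEq ι] [Fintype α] [DecidableEq α]
    [Nonempty α] (x : ι → α) (ℓ : ℕ) :
    #(hammingBall x ℓ) ≤ (∑ k ∈ range (ℓ + 1), (Fintype.card ι).choose k) * Fintype.card α ^ ℓ := by
  let box (s : Finset ι) : Finset (ι → α) :=
    Fintype.piFinset fun i => if i ∈ s then univ else {x i}
  have hcover : hammingBall x ℓ ⊆
      (range (ℓ + 1)).biUnion fun k => (powersetCard k univ).biUnion box := by
    intro y hy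
    have hd : hammingDist x y ≤ ℓ := (mem_filter.1 hy).2
    have hy : y ∈ box (univ.filter fun i => x i ≠ y i) :=
      Fintype.mem_piFinset.2 fun i => by by_cases h : x i = y i <;> simp [h]
    simp only [mem_biUnion, mem_range, mem_powersetCard]
    exact ⟨hammingDist x y, by omega, _, ⟨subset_univ _, rfl⟩, hy⟩
  have hbox : ∀ k ≤ ℓ, ∀ s ∈ powersetCard k (univ : Finset ι), #(box s) ≤ Fintype.card α ^ ℓ := by
    intro k hk s hs
    have hcard : #(box s) = Fintype.card α ^ k := by
      simp [box, apply_ite card, (mem_powersetCard.1 hs).2]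
    exact hcard ▸ Nat.pow_le_pow_right Fintype.card_pos hk
  calc #(hammingBall x ℓ)
      ≤ ∑ k ∈ range (ℓ + 1), #((powersetCard k univ).biUnion box) :=
        (card_le_card hcover).trans card_biUnion_le
    _ ≤ ∑ k ∈ range (ℓ + 1), (Fintype.card ι).choose k * Fintype.card α ^ ℓ := by
        refine sum_le_sum fun k hk => ?_
        have := card_biUnion_le_card_mul _ box _ (hbox k (Nat.lt_succ_iff.1 (mem_range.1 hk)))
        rwa [card_powersetCard, card_univ] at this
    _ = (∑ k ∈ range (ℓ + 1), (Fintype.card ι).choose k) * Fintype.card α ^ ℓ := (sum_mul ..).symm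

namespace IsPmf

variable {Z : Type*} [Fintype Z] {P : Z → ℝ}

lemma nonempty (hP : IsPmf P) : Nonempty Z := by
  by_contra h
  have := hP.2
  simp [not_nonempty_iff.1 h] at this

lemma le_one (hP : IsPmf P) (z : Z) : P z ≤ 1 :=
  hP.2 ▸ single_le_sum (fun w _ => hP.1 w) (mem_univ z)

lemma iInf_pos (hP : IsPmf P) (hpos : ∀ z, 0 < P z) : 0 < ⨅ z, P z := by
  have := hP.nonempty
  obtain ⟨z, hz⟩ := exists_eq_ciInf_of_finite (f := P)
  exact hz ▸ hpos z

lemma iInf_le_one (hP : IsPmf P) : (⨅ z, P z) ≤ 1 := by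
  have := hP.nonempty
  exact (ciInf_le (Finite.bddBelow_range P) (Classical.arbitrary Z)).trans (hP.le_one _)

lemma le_mul_inv_iInf (hP : IsPmf P) (hpos : ∀ z, 0 < P z) (z w : Z) :
    P w ≤ P z * (⨅ z, P z)⁻¹ :=
  calc P w ≤ 1 := hP.le_one w
    _ = (⨅ z, P z) * (⨅ z, P z)⁻¹ := (mul_inv_cancel₀ (hP.iInf_pos hpos).ne').symm
    _ ≤ P z * (⨅ z, P z)⁻¹ := by
        gcongr
        · exact (inv_pos.2 (hP.iInf_pos hpos)).le
        · exact ciInf_le (Finite.bddBelow_range P) z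

end IsPmf

lemma prodPmf_le_mul_pow_hammingDist {α : Type*} [Fintype α] [DecidableEq α] {Q : α → ℝ}
    {c : ℝ} (hQ : ∀ a, 0 ≤ Q a) (hc : ∀ a b, Q b ≤ Q a * c) {n : ℕ} (x y : Fin n → α) :
    prodPmf Q n y ≤ prodPmf Q n x * c ^ hammingDist x y := by
  have hcoord : ∀ i, Q (y i) ≤ Q (x i) * if x i ≠ y i then c else 1 := by
    intro i
    split_ifs with h
    · exact hc _ _
    · rw [not_not.1 h, mul_one]
  calc prodPmf Q n y ≤ ∏ i, Q (x i) * (if x i ≠ y i then c else 1) :=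
        prod_le_prod (fun i _ => hQ _) (fun i _ => hcoord i)
    _ = prodPmf Q n x * c ^ hammingDist x y := by
        rw [prod_mul_distrib, ← prod_filter, prod_const]
        rfl

lemma prodPmf_nonneg {α : Type*} [Fintype α] {Q : α → ℝ} (hQ : ∀ a, 0 ≤ Q a) (n : ℕ)
    (x : Fin n → α) : 0 ≤ prodPmf Q n x :=
  prod_nonneg fun i _ => hQ (x i)

lemma sum_prodPmf_hammingBall_le {α : Type*} [Fintype α] [DecidableEq α] {Q : α → ℝ}
    (hQ : IsPmf Q) (hQpos : ∀ a, 0 < Q a) {n ℓ : ℕ} (hℓ : (ℓ : ℝ) ≤ n / 2) (x : Fin n → α) :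
    ∑ y ∈ hammingBall x ℓ, prodPmf Q n y ≤
      prodPmf Q n x * ((2 : ℝ) ^ ((n : ℝ) * binEnt ((ℓ : ℝ) / n)) *
        (Fintype.card α : ℝ) ^ ℓ * (⨅ a, Q a)⁻¹ ^ ℓ) := by
  have := hQ.nonempty
  have hc : 1 ≤ (⨅ a, Q a)⁻¹ := (one_le_inv₀ (hQ.iInf_pos hQpos)).2 hQ.iInf_le_one
  have hterm : ∀ y ∈ hammingBall x ℓ, prodPmf Q n y ≤ prodPmf Q n x * (⨅ a, Q a)⁻¹ ^ ℓ :=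
    fun y hy => (prodPmf_le_mul_pow_hammingDist hQ.1 (hQ.le_mul_inv_iInf hQpos) x y).trans <|
      mul_le_mul_of_nonneg_left (pow_le_pow_right₀ hc (mem_filter.1 hy).2)
        (prodPmf_nonneg hQ.1 n x)
  have hcard : (#(hammingBall x ℓ) : ℝ) ≤
      (2 : ℝ) ^ ((n : ℝ) * binEnt ((ℓ : ℝ) / n)) * (Fintype.card α : ℝ) ^ ℓ :=
    calc (#(hammingBall x ℓ) : ℝ)
        ≤ (((∑ k ∈ range (ℓ + 1), (Fintype.card (Fin n)).choose k) *
            Fintype.card α ^ ℓ : ℕ) : ℝ) := by exact_mod_cast card_hammingBall_le x ℓ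
      _ = (∑ k ∈ range (ℓ + 1), (n.choose k : ℝ)) * (Fintype.card α : ℝ) ^ ℓ := by
          push_cast [Fintype.card_fin]; rfl
      _ ≤ _ := by gcongr; exact sum_range_choose_le_two_rpow_mul_binEnt hℓ
  calc ∑ y ∈ hammingBall x ℓ, prodPmf Q n y
      ≤ #(hammingBall x ℓ) * (prodPmf Q n x * (⨅ a, Q a)⁻¹ ^ ℓ) := by
        rw [← nsmul_eq_mul]; exact sum_le_card_nsmul _ _ _ hterm
    _ ≤ (2 : ℝ) ^ ((n : ℝ) * binEnt ((ℓ : ℝ) / n)) * (Fintype.card α : ℝ) ^ ℓ *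
          (prodPmf Q n x * (⨅ a, Q a)⁻¹ ^ ℓ) := by
        have := prodPmf_nonneg hQ.1 n x
        gcongr
    _ = _ := by ring

theorem blow_up_prob_le_general {α : Type*} [Fintype α] [DecidableEq α]
    (Q : α → ℝ) (hQ : IsPmf Q) (hQpos : ∀ a, 0 < Q a)
    (n : ℕ) (ℓ : ℕ) (hℓ : (ℓ : ℝ) ≤ (n : ℝ) / 2)
    (A : Finset (Fin n → α)) :
    ∑ y ∈ Finset.univ.filter (fun y : Fin n → α => ∃ x ∈ A, hammingDist x y ≤ ℓ),
        prodPmf Q n y ≤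
      (∑ x ∈ A, prodPmf Q n x) * (2 : ℝ) ^ ((n : ℝ) * binEnt ((ℓ : ℝ) / n)) *
        (Fintype.card α : ℝ) ^ ℓ * (⨅ a, Q a) ^ (-(ℓ : ℤ)) := by
  have hblowup : Finset.univ.filter (fun y : Fin n → α => ∃ x ∈ A, hammingDist x y ≤ ℓ) =
      A.biUnion (hammingBall · ℓ) := by
    ext y
    simp [hammingBall]
  calc _ ≤ ∑ x ∈ A, ∑ y ∈ hammingBall x ℓ, prodPmf Q n y :=
        hblowup ▸ sum_biUnion_le_sum_sum (prodPmf_nonneg hQ.1 n)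
    _ ≤ ∑ x ∈ A, prodPmf Q n x * ((2 : ℝ) ^ ((n : ℝ) * binEnt ((ℓ : ℝ) / n)) *
          (Fintype.card α : ℝ) ^ ℓ * (⨅ a, Q a)⁻¹ ^ ℓ) :=
        sum_le_sum fun x _ => sum_prodPmf_hammingBall_le hQ hQpos hℓ x
    _ = _ := by rw [← sum_mul, zpow_neg, zpow_natCast, inv_pow]; ring

theorem blow_up_prob_le {α : Type*} [Fintype α] [DecidableEq α] [Nonempty α]
    (hcard : 2 ≤ Fintype.card α)
    (Q : α → ℝ) (hQ : IsPmf Q) (hQpos : ∀ a, 0 < Q a)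
    (n : ℕ) (hn : 1 ≤ n) (ℓ : ℕ) (hℓ : (ℓ : ℝ) ≤ (n : ℝ) / 2)
    (A : Finset (Fin n → α)) :
    ∑ y ∈ Finset.univ.filter (fun y : Fin n → α => ∃ x ∈ A, hammingDist x y ≤ ℓ),
        prodPmf Q n y ≤
      (∑ x ∈ A, prodPmf Q n x) * (2 : ℝ) ^ ((n : ℝ) * binEnt ((ℓ : ℝ) / n)) *
        (Fintype.card α : ℝ) ^ ℓ * (⨅ a, Q a) ^ (-(ℓ : ℤ)) :=
  blow_up_prob_le_general Q hQ hQpos n ℓ hℓ A
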